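/- arXiv:math/9712297 — 5 statements merged into one kernel-verified Lean document; each statement's English description precedes it below -/
import Mathlib

section
/- Let A be the ring of integers in a finite extension K of ℚ_p and H a finite A-algebra (commutative). For every x ∈ H, the sequence x^{m!} converges in H (with the p-adic topology) to an idempotent e_x, and for every finite H-module M, e_x M is the largest H-submodule of M on which multiplication by x is bijective. -/
/-!
Modulo `p ^ n` the ring `H` is finite, so the powers of `x` are eventually periodic there and
`x ^ m!` is eventually a constant idempotent of `H ⧸ p ^ n`. Since `H` is finite over `ℤ_[p]`
it is `p`-adically complete and separated, so these constants glue to an idempotent `e`.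
On `e • M`, multiplication by `x` agrees with `x * e + 1 - e`, which is a unit because it is a
unit modulo `p` and `p` lies in the Jacobson radical. Conversely, if `x` is bijective on `N`,
every `v ∈ N` is `x ^ m! • w` with `w ∈ N`, so `(1 - e) • v = ((1 - e) * (x ^ m! - e)) • w`
lies in `p ^ n • M` for every `n` and vanishes by Krull's intersection theorem.
-/

open Filter

theorem exists_pos_isIdempotentElem_pow {M : Type*} [Monoid M] [Finite M] (a : M) :
    ∃ c, 0 < c ∧ IsIdempotentElem (a ^ c) := by
  obtain ⟨i, j, hij, h⟩ : ∃ i j : ℕ, i < j ∧ a ^ i = a ^ j := by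
    obtain ⟨i, j, hne, h⟩ := Finite.exists_ne_map_eq_of_infinite (a ^ · : ℕ → M)
    rcases hne.lt_or_gt with hlt | hlt
    exacts [⟨i, j, hlt, h⟩, ⟨j, i, hlt, h.symm⟩]
  obtain ⟨d, rfl⟩ := Nat.exists_eq_add_of_lt hij
  have periodic : ∀ k t, a ^ (i + k + (d + 1) * t) = a ^ (i + k) := by
    intro k t
    induction t with
    | zero => simp
    | succ t ih =>
      calc a ^ (i + k + (d + 1) * (t + 1)) = a ^ (i + d + 1) * a ^ (k + (d + 1) * t) := by
            rw [← pow_add]; ring_nf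
        _ = a ^ (i + k) := by rw [← h, ← pow_add, ← add_assoc, ih]
  refine ⟨(d + 1) * (i + 1), by positivity, ?_⟩
  have := periodic (d * (i + 1) + 1) (i + 1)
  rw [IsIdempotentElem, ← pow_add]
  convert this using 2 <;> ring

theorem exists_isIdempotentElem_pow_factorial {M : Type*} [Monoid M] [Finite M] (a : M) :
    ∃ N : ℕ, IsIdempotentElem (a ^ N.factorial) ∧
      ∀ m : ℕ, N ≤ m → a ^ m.factorial = a ^ N.factorial := by
  obtain ⟨c, hc, hidem⟩ := exists_pos_isIdempotentElem_pow a
  have key : ∀ m, c ≤ m → a ^ m.factorial = a ^ c := by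
    intro m hm
    obtain ⟨k, hk⟩ := Nat.dvd_factorial hc hm
    have hk0 : k ≠ 0 := by rintro rfl; exact Nat.factorial_ne_zero m (by simpa using hk)
    rw [hk, pow_mul, hidem.pow_eq hk0]
  exact ⟨c, by rw [key c le_rfl]; exact hidem, fun m hm => by rw [key m hm, key c le_rfl]⟩

section Adic

variable {R : Type*} [CommRing R] (I : Ideal R)

theorem IsPrecomplete.of_finite [IsPrecomplete I R] (M : Type*) [AddCommGroup M] [Module R M]
    [Module.Finite R M] : IsPrecomplete I M := by
  rw [← AdicCompletion.of_surjective_iff]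
  intro y
  obtain ⟨t, rfl⟩ := AdicCompletion.ofTensorProduct_surjective_of_finite I M y
  change _ ∈ LinearMap.range (AdicCompletion.of I M)
  induction t using TensorProduct.induction_on with
  | zero => simp
  | tmul a m =>
    obtain ⟨r, rfl⟩ := AdicCompletion.of_surjective I R a
    refine ⟨r • m, ?_⟩
    rw [AdicCompletion.ofTensorProduct_tmul, map_smul, ← algebraMap_smul (AdicCompletion I R),
      AdicCompletion.algebraMap_apply, Algebra.algebraMap_self, RingHom.id_apply]
  | add s t hs ht => rw [map_add]; exact add_mem hs ht

theorem isAdicComplete_map_algebraMap [IsNoetherianRing R] [IsAdicComplete I R]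
    (H : Type*) [CommRing H] [Algebra R H] [Module.Finite R H] :
    IsAdicComplete (I.map (algebraMap R H)) H :=
  have := IsPrecomplete.of_finite I H
  have := IsHausdorff.of_le_jacobson I H (IsAdicComplete.le_jacobson_bot I)
  { toIsHausdorff := IsHausdorff.map_algebraMap_iff.mpr ‹_›
    toIsPrecomplete := IsPrecomplete.map_algebraMap_iff.mpr ‹_› }

theorem finite_quotient_map_algebraMap [Finite (R ⧸ I)]
    (H : Type*) [CommRing H] [Algebra R H] [Module.Finite R H] :
    Finite (H ⧸ I.map (algebraMap R H)) :=
  have := Module.Finite.of_restrictScalars_finite R (R ⧸ I) (H ⧸ I.map (algebraMap R H))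
  Module.finite_of_finite (R ⧸ I)

variable {M : Type*} [AddCommGroup M] [Module R M]

theorem IsPrecomplete.exists_forall_eventually_smodEq [IsPrecomplete I M] {u : ℕ → M}
    (hu : ∀ n, ∃ a, ∀ᶠ m in atTop, u m ≡ a [SMOD (I ^ n • ⊤ : Submodule R M)]) :
    ∃ L, ∀ n, ∀ᶠ m in atTop, u m ≡ L [SMOD (I ^ n • ⊤ : Submodule R M)] := by
  choose a ha using hu
  have mono {m n : ℕ} (h : m ≤ n) : (I ^ n • ⊤ : Submodule R M) ≤ I ^ m • ⊤ :=
    Submodule.smul_mono_left (Ideal.pow_le_pow_right h)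
  obtain ⟨L, hL⟩ := IsPrecomplete.prec ‹_› (f := a) fun {m n} hmn => by
    obtain ⟨k, hkm, hkn⟩ := ((ha m).and (ha n)).exists
    exact hkm.symm.trans (SModEq.mono (mono hmn) hkn)
  exact ⟨L, fun n => (ha n).mono fun m hm => hm.trans (hL n)⟩

end Adic

section Idempotent

variable {H : Type*} [CommRing H]

theorem IsIdempotentElem.mul_add_one_sub_pow {e : H} (he : IsIdempotentElem e) (x : H) (k : ℕ) :
    (x * e + 1 - e) ^ k = x ^ k * e + 1 - e := by
  induction k with
  | zero => simp
  | succ k ih =>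
    rw [pow_succ, ih]
    linear_combination (x ^ (k + 1) - x ^ k - x + 1) * he.eq

theorem isUnit_mul_add_one_sub_of_pow_sub_mem {J : Ideal H} (hJ : J ≤ (⊥ : Ideal H).jacobson)
    {e x : H} (he : IsIdempotentElem e) {k : ℕ} (hk : k ≠ 0) (h : x ^ k - e ∈ J) :
    IsUnit (x * e + 1 - e) := by
  rw [← isUnit_pow_iff hk, he.mul_add_one_sub_pow]
  refine Ideal.isUnit_of_sub_one_mem_jacobson_bot _ (hJ ?_)
  convert J.mul_mem_right e h using 1
  linear_combination he.eq

variable (J : Ideal H)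

theorem exists_isIdempotentElem_pow_factorial_sub_mem [IsAdicComplete J H]
    (hfin : ∀ n, Finite (H ⧸ J ^ n)) (x : H) :
    ∃ e, IsIdempotentElem e ∧ ∀ n, ∀ᶠ m : ℕ in atTop, x ^ m.factorial - e ∈ J ^ n := by
  have stable (n : ℕ) : ∃ N : ℕ,
      IsIdempotentElem (Ideal.Quotient.mk (J ^ n) (x ^ N.factorial)) ∧
      ∀ m : ℕ, N ≤ m → x ^ m.factorial - x ^ N.factorial ∈ J ^ n := by
    simp_rw [← Ideal.Quotient.eq, map_pow]
    exact exists_isIdempotentElem_pow_factorial _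
  choose N hidem hN using stable
  have hu (n : ℕ) : ∀ᶠ m : ℕ in atTop,
      x ^ m.factorial ≡ x ^ (N n).factorial [SMOD (J ^ n • ⊤ : Submodule H H)] :=
    eventually_atTop.2 ⟨N n, fun m hm => by simpa [SModEq.sub_mem] using hN n m hm⟩
  obtain ⟨e, he⟩ := IsPrecomplete.exists_forall_eventually_smodEq J fun n => ⟨_, hu n⟩
  simp only [smul_eq_mul, Ideal.mul_top, SModEq.sub_mem] at he
  refine ⟨e, ?_, he⟩
  rw [IsIdempotentElem, IsHausdorff.eq_iff_smodEq (I := J)]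
  intro n
  obtain ⟨m, hme, hmN⟩ := ((he n).and (eventually_ge_atTop (N n))).exists
  have hmk : Ideal.Quotient.mk (J ^ n) e = Ideal.Quotient.mk (J ^ n) (x ^ (N n).factorial) := by
    rw [Ideal.Quotient.eq]
    simpa using sub_mem (hN n m hmN) hme
  rw [SModEq.sub_mem, smul_eq_mul, Ideal.mul_top, ← Ideal.Quotient.eq, map_mul, hmk]
  exact hidem n

end Idempotent

section Module

variable {H M : Type*} [CommRing H] [AddCommGroup M] [Module H M]

theorem mem_range_lsmul_iff {e : H} (he : IsIdempotentElem e) {v : M} :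
    v ∈ LinearMap.range (LinearMap.lsmul H M e) ↔ e • v = v := by
  refine ⟨?_, fun h => ⟨v, h⟩⟩
  rintro ⟨w, rfl⟩
  simp [smul_smul, he.eq]

theorem bijective_smul_range_lsmul {e x : H} (he : IsIdempotentElem e)
    (hu : IsUnit (x * e + 1 - e)) :
    Function.Bijective fun v : LinearMap.range (LinearMap.lsmul H M e) =>
      (⟨x • (v : M), (LinearMap.range (LinearMap.lsmul H M e)).smul_mem x v.2⟩ :
        LinearMap.range (LinearMap.lsmul H M e)) := by
  obtain ⟨u, hu⟩ := hu
  have hx {v : M} (hv : v ∈ LinearMap.range (LinearMap.lsmul H M e)) : x • v = (u : H) • v := by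
    rw [mem_range_lsmul_iff he] at hv
    rw [hu, sub_smul, add_smul, mul_smul, hv, one_smul, add_sub_cancel_right]
  refine ⟨fun v w hvw => Subtype.ext ?_, fun v => ?_⟩
  · have := congrArg Subtype.val hvw
    simp only [hx v.2, hx w.2] at this
    exact u.isUnit.smul_left_cancel.mp this
  · refine ⟨⟨(↑u⁻¹ : H) • (v : M), Submodule.smul_mem _ _ v.2⟩, Subtype.ext ?_⟩
    simp only
    rw [hx (Submodule.smul_mem _ _ v.2), smul_smul, Units.mul_inv, one_smul]

theorem exists_pow_smul_eq_of_surjective {x : H} {N : Submodule H M}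
    (hN : Function.Surjective fun v : N => (⟨x • (v : M), N.smul_mem x v.2⟩ : N)) (k : ℕ)
    {v : M} (hv : v ∈ N) : ∃ w ∈ N, x ^ k • w = v := by
  induction k generalizing v with
  | zero => exact ⟨v, hv, by simp⟩
  | succ k ih =>
    obtain ⟨w, hwN, rfl⟩ := ih hv
    obtain ⟨w', hw'⟩ := hN ⟨w, hwN⟩
    have hxw : x • (w' : M) = w := congrArg Subtype.val hw'
    exact ⟨w', w'.2, by rw [pow_succ, mul_smul, hxw]⟩

theorem le_range_lsmul_of_surjective (J : Ideal H) [IsHausdorff J M] {e x : H}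
    (he : IsIdempotentElem e) (hx : ∀ n, ∃ k, x ^ k - e ∈ J ^ n) {N : Submodule H M}
    (hN : Function.Surjective fun v : N => (⟨x • (v : M), N.smul_mem x v.2⟩ : N)) :
    N ≤ LinearMap.range (LinearMap.lsmul H M e) := by
  intro v hv
  rw [mem_range_lsmul_iff he, IsHausdorff.eq_iff_smodEq (I := J)]
  intro n
  obtain ⟨k, hk⟩ := hx n
  obtain ⟨w, -, rfl⟩ := exists_pow_smul_eq_of_surjective hN k hv
  rw [SModEq.sub_mem, smul_smul, ← sub_smul]
  convert Submodule.smul_mem_smul ((J ^ n).mul_mem_left (e - 1) hk) Submodule.mem_top using 2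
  linear_combination he.eq

end Module

theorem isGreatest_range_lsmul {H : Type*} [CommRing H] [IsNoetherianRing H] (J : Ideal H)
    [IsAdicComplete J H] (M : Type*) [AddCommGroup M] [Module H M] [Module.Finite H M]
    {e x : H} (he : IsIdempotentElem e)
    (hx : ∀ n, ∀ᶠ m : ℕ in atTop, x ^ m.factorial - e ∈ J ^ n) :
    IsGreatest
      {N : Submodule H M | Function.Bijective fun v : N => (⟨x • (v : M), N.smul_mem x v.2⟩ : N)}
      (LinearMap.range (LinearMap.lsmul H M e)) := by
  have hJ := IsAdicComplete.le_jacobson_bot J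
  have := IsHausdorff.of_le_jacobson J M hJ
  obtain ⟨m, hm⟩ := (hx 1).exists
  have hu := isUnit_mul_add_one_sub_of_pow_sub_mem hJ he (Nat.factorial_ne_zero m)
    (by simpa using hm)
  exact ⟨bijective_smul_range_lsmul he hu, fun N hN =>
    le_range_lsmul_of_surjective J he (fun n => ⟨_, (hx n).exists.choose_spec⟩) hN.2⟩

section PadicInt

variable (p : ℕ) [Fact p.Prime] (H : Type*) [CommRing H] [Algebra ℤ_[p] H]

theorem PadicInt.map_maximalIdeal_eq_span_p :
    (IsLocalRing.maximalIdeal ℤ_[p]).map (algebraMap ℤ_[p] H) = Ideal.span {(p : H)} := by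
  rw [PadicInt.maximalIdeal_eq_span_p, Ideal.map_span, Set.image_singleton, map_natCast]

variable [Module.Finite ℤ_[p] H]

theorem PadicInt.isAdicComplete_span_p : IsAdicComplete (Ideal.span {(p : H)}) H :=
  PadicInt.map_maximalIdeal_eq_span_p p H ▸ isAdicComplete_map_algebraMap _ H

theorem PadicInt.finite_quotient_span_p : Finite (H ⧸ Ideal.span {(p : H)}) :=
  PadicInt.map_maximalIdeal_eq_span_p p H ▸ finite_quotient_map_algebraMap _ H

end PadicInt

/-- Let `A` be the ring of integers in a finite extension `K` of `ℚ_p` (i.e. the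
integral closure of `ℤ_p` in `K`) and `H` a commutative finite `A`-algebra.
For every `x ∈ H` the sequence `x^{m!}` converges `p`-adically in `H` to an
idempotent `e_x`, and for every finite `H`-module `M`, `e_x M` is the largest
`H`-submodule of `M` on which multiplication by `x` is bijective. -/
theorem exists_ordinary_idempotent (p : ℕ) [Fact p.Prime]
    (K : Type*) [Field K] [Algebra ℚ_[p] K] [FiniteDimensional ℚ_[p] K]
    [Algebra ℤ_[p] K] [IsScalarTower ℤ_[p] ℚ_[p] K]
    (H : Type*) [CommRing H] [Algebra (integralClosure ℤ_[p] K) H]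
    [Module.Finite (integralClosure ℤ_[p] K) H] (x : H) :
    ∃ e : H, IsIdempotentElem e ∧
      (∀ n : ℕ, ∀ᶠ m in atTop, x ^ (Nat.factorial m) - e ∈ Ideal.span {(p : H) ^ n}) ∧
      ∀ (M : Type) (_ : AddCommGroup M) (_ : Module H M) (_ : Module.Finite H M),
        IsGreatest
          {N : Submodule H M |
            Function.Bijective fun v : N => (⟨x • (v : M), N.smul_mem x v.2⟩ : N)}
          (LinearMap.range (LinearMap.lsmul H M e)) := by
  let : Algebra ℤ_[p] H :=
    ((algebraMap (integralClosure ℤ_[p] K) H).comp (algebraMap ℤ_[p] _)).toAlgebra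
  have : IsScalarTower ℤ_[p] (integralClosure ℤ_[p] K) H := .of_algebraMap_eq fun _ => rfl
  have : Module.Finite ℤ_[p] (integralClosure ℤ_[p] K) :=
    IsIntegralClosure.finite ℤ_[p] ℚ_[p] K (integralClosure ℤ_[p] K)
  have : Module.Finite ℤ_[p] H := .trans (integralClosure ℤ_[p] K) H
  have : IsNoetherianRing H :=
    isNoetherian_of_tower ℤ_[p] (isNoetherian_of_isNoetherianRing_of_finite ℤ_[p] H)
  have := PadicInt.isAdicComplete_span_p p H
  have := PadicInt.finite_quotient_span_p p H
  obtain ⟨e, he, hx⟩ := exists_isIdempotentElem_pow_factorial_sub_mem (Ideal.span {(p : H)})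
    (Ideal.finite_quotient_pow (IsNoetherian.noetherian _)) x
  simp only [← Ideal.span_singleton_pow]
  exact ⟨e, he, hx, fun M _ _ _ => isGreatest_range_lsmul _ M he hx⟩
end

section
/- Let α, β be the two roots of X² − aX + c = 0 in a field of characteristic 0 with α ≠ β. Consider the 2×2 matrix U = [[a, 1], [−c, 0]]. Then its eigenvalues are α and β, the vectors (1, −β) and (1, −α) are respective eigenvectors, and if |α|_p = 1 > |β|_p (for a p-adic absolute value on the field), then U^{m!} converges as m → ∞ to the projection onto the α-eigenline along the β-eigenline, scaled by the limit of α^{m!}. -/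
/-! Some power `α ^ N` lies within distance `< 1` of `1`, since the powers of `α` lie in the
compact unit ball. In an ultrametric field `‖x ^ n - 1‖ ≤ ‖x - 1‖ * max ‖n‖ ‖x - 1‖` for
`‖x‖ ≤ 1`, so `|p| < 1` forces `(α ^ N) ^ (p ^ k) → 1`, and `N * p ^ k` divides `m!` once
`m ≥ N * p ^ k`; hence `α ^ m! → 1`. On the matrix side `U = α • P + β • Q` with `P + Q = 1`,
`P U = α P`, `Q U = β Q`, so `U ^ n = α ^ n • P + β ^ n • Q`, and `β ^ m! → 0` kills the second
term. -/

open Filter Topology Finset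

section Ultrametric

variable {K : Type*} [NormedField K] [IsUltrametricDist K]

lemma norm_geom_sum_le_one {x : K} (hx : ‖x‖ ≤ 1) (n : ℕ) : ‖∑ i ∈ range n, x ^ i‖ ≤ 1 :=
  IsUltrametricDist.norm_sum_le_of_forall_le_of_nonneg zero_le_one fun i _ => by
    rw [norm_pow]; exact pow_le_one₀ (norm_nonneg x) hx

lemma norm_pow_sub_one_le {x : K} (hx : ‖x‖ ≤ 1) (n : ℕ) : ‖x ^ n - 1‖ ≤ ‖x - 1‖ := by
  rw [← geom_sum_mul, norm_mul]
  exact mul_le_of_le_one_left (norm_nonneg _) (norm_geom_sum_le_one hx n)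

lemma norm_pow_sub_one_le_mul_max {x : K} (hx : ‖x‖ ≤ 1) (n : ℕ) :
    ‖x ^ n - 1‖ ≤ ‖x - 1‖ * max ‖(n : K)‖ ‖x - 1‖ := by
  have hsum : ∑ i ∈ range n, x ^ i = n + ∑ i ∈ range n, (x ^ i - 1) := by
    simp [Finset.sum_sub_distrib]
  rw [← geom_sum_mul, norm_mul, mul_comm, hsum]
  gcongr
  refine (IsUltrametricDist.norm_add_le_max _ _).trans (max_le_max le_rfl ?_)
  exact IsUltrametricDist.norm_sum_le_of_forall_le_of_nonneg (norm_nonneg _)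
    fun i _ => norm_pow_sub_one_le hx i

lemma tendsto_pow_pow_of_norm_sub_one_lt {p : ℕ} (hp : ‖(p : K)‖ < 1) {x : K}
    (hx : ‖x - 1‖ < 1) : Tendsto (fun k => x ^ p ^ k) atTop (𝓝 1) := by
  have hx1 : ‖x‖ ≤ 1 := by
    simpa using (IsUltrametricDist.norm_add_le_max (x - 1) 1).trans (max_le hx.le norm_one.le)
  set s := max ‖(p : K)‖ ‖x - 1‖
  have hbound : ∀ k, ‖x ^ p ^ k - 1‖ ≤ ‖x - 1‖ * s ^ k := by
    intro k
    induction k with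
    | zero => simp
    | succ k ih =>
      have hxk : ‖x ^ p ^ k‖ ≤ 1 := by rw [norm_pow]; exact pow_le_one₀ (norm_nonneg x) hx1
      calc ‖x ^ p ^ (k + 1) - 1‖ = ‖(x ^ p ^ k) ^ p - 1‖ := by rw [pow_succ, pow_mul]
        _ ≤ ‖x ^ p ^ k - 1‖ * max ‖(p : K)‖ ‖x ^ p ^ k - 1‖ := norm_pow_sub_one_le_mul_max hxk p
        _ ≤ (‖x - 1‖ * s ^ k) * s := by
          gcongr; exact max_le_max le_rfl (norm_pow_sub_one_le hx1 _)
        _ = ‖x - 1‖ * s ^ (k + 1) := by ring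
  rw [tendsto_iff_norm_sub_tendsto_zero]
  refine squeeze_zero (fun _ => norm_nonneg _) hbound ?_
  simpa using (tendsto_pow_atTop_nhds_zero_of_lt_one (by positivity) (max_lt hp hx)).const_mul
    ‖x - 1‖

lemma tendsto_pow_factorial_of_norm_pow_sub_one_lt {p : ℕ} (hp0 : p ≠ 0) (hp : ‖(p : K)‖ < 1)
    {α : K} (hα : ‖α‖ ≤ 1) {N : ℕ} (hN : 0 < N) (hαN : ‖α ^ N - 1‖ < 1) :
    Tendsto (fun m : ℕ => α ^ Nat.factorial m) atTop (𝓝 1) := by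
  have hαN1 : ‖α ^ N‖ ≤ 1 := by rw [norm_pow]; exact pow_le_one₀ (norm_nonneg α) hα
  rw [Metric.tendsto_atTop]
  intro ε hε
  obtain ⟨k, hk⟩ := Metric.tendsto_atTop.1 (tendsto_pow_pow_of_norm_sub_one_lt hp hαN) ε hε
  replace hk := hk k le_rfl
  refine ⟨N * p ^ k, fun m hm => ?_⟩
  obtain ⟨q, hq⟩ := Nat.dvd_factorial (by positivity) hm
  have hαNk : ‖(α ^ N) ^ p ^ k‖ ≤ 1 := by rw [norm_pow]; exact pow_le_one₀ (norm_nonneg _) hαN1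
  rw [dist_eq_norm] at hk ⊢
  rw [hq, pow_mul, pow_mul]
  exact (norm_pow_sub_one_le hαNk q).trans_lt hk

end Ultrametric

lemma exists_norm_pow_sub_one_lt {K : Type*} [NormedField K] [ProperSpace K] {α : K}
    (hα : ‖α‖ = 1) : ∃ N, 0 < N ∧ ‖α ^ N - 1‖ < 1 := by
  have hmem : ∀ n : ℕ, α ^ n ∈ Metric.closedBall (0 : K) 1 := fun n => by simp [hα]
  obtain ⟨L, -, σ, hσ, hconv⟩ := (isCompact_closedBall (0 : K) 1).tendsto_subseq hmem
  obtain ⟨n, hn⟩ := Metric.cauchySeq_iff'.1 hconv.cauchySeq 1 one_pos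
  obtain ⟨N, hN⟩ : ∃ N, σ (n + 1) = σ n + N := Nat.exists_eq_add_of_le (hσ.monotone n.le_succ)
  refine ⟨N, by have := hσ (Nat.lt_add_one n); omega, ?_⟩
  have := hn (n + 1) n.le_succ
  rwa [Function.comp_apply, Function.comp_apply, dist_eq_norm, hN, pow_add, ← mul_sub_one,
    norm_mul, norm_pow, hα, one_pow, one_mul] at this

lemma tendsto_pow_factorial_of_norm_eq_one {K : Type*} [NormedField K] [IsUltrametricDist K]
    [ProperSpace K] {p : ℕ} (hp0 : p ≠ 0) (hp : ‖(p : K)‖ < 1) {α : K} (hα : ‖α‖ = 1) :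
    Tendsto (fun m : ℕ => α ^ Nat.factorial m) atTop (𝓝 1) := by
  obtain ⟨N, hN, hαN⟩ := exists_norm_pow_sub_one_lt hα
  exact tendsto_pow_factorial_of_norm_pow_sub_one_lt hp0 hp hα.le hN hαN

section IsometricAlgebra

variable {𝕜 K : Type*} [NormedField K]

lemma IsUltrametricDist.of_norm_algebraMap [NormedField 𝕜] [IsUltrametricDist 𝕜] [Algebra 𝕜 K]
    (hext : ∀ y : 𝕜, ‖algebraMap 𝕜 K y‖ = ‖y‖) : IsUltrametricDist K :=
  IsUltrametricDist.isUltrametricDist_of_forall_norm_natCast_le_one fun n => by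
    rw [← map_natCast (algebraMap 𝕜 K), hext]; exact IsUltrametricDist.norm_natCast_le_one 𝕜 n

lemma ProperSpace.of_norm_algebraMap [NontriviallyNormedField 𝕜] [LocallyCompactSpace 𝕜]
    [Algebra 𝕜 K] [FiniteDimensional 𝕜 K] (hext : ∀ y : 𝕜, ‖algebraMap 𝕜 K y‖ = ‖y‖) :
    ProperSpace K :=
  letI : NormedSpace 𝕜 K := ⟨fun q y => by rw [Algebra.smul_def, norm_mul, hext]⟩
  FiniteDimensional.proper 𝕜 K

end IsometricAlgebra

section CompanionOfRoots

variable {K : Type*} [Field K]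

def companionOfRoots (α β : K) : Matrix (Fin 2) (Fin 2) K := !![α + β, 1; -(α * β), 0]

def eigenprojection (α β : K) : Matrix (Fin 2) (Fin 2) K := (α - β)⁻¹ • !![α, 1; -(α * β), -β]

lemma companionOfRoots_comm (α β : K) : companionOfRoots α β = companionOfRoots β α := by
  rw [companionOfRoots, companionOfRoots, add_comm, mul_comm]

lemma companionOfRoots_mulVec (α β : K) :
    (companionOfRoots α β).mulVec ![1, -β] = α • ![1, -β] := by
  ext i; fin_cases i <;> simp [companionOfRoots]

lemma eigenprojection_mul_companionOfRoots (α β : K) :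
    eigenprojection α β * companionOfRoots α β = α • eigenprojection α β := by
  rw [eigenprojection, companionOfRoots, Matrix.smul_mul, smul_comm]
  congr 1
  ext i j; fin_cases i <;> fin_cases j <;> simp [Matrix.mul_apply] <;> ring

lemma eigenprojection_add_eigenprojection {α β : K} (h : α ≠ β) :
    eigenprojection α β + eigenprojection β α = 1 := by
  have h' : α - β ≠ 0 := sub_ne_zero.2 h
  have h'' : β - α ≠ 0 := sub_ne_zero.2 h.symm
  ext i j; fin_cases i <;> fin_cases j <;> simp [eigenprojection] <;> field_simp <;> ring

lemma companionOfRoots_pow {α β : K} (h : α ≠ β) (n : ℕ) :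
    companionOfRoots α β ^ n = α ^ n • eigenprojection α β + β ^ n • eigenprojection β α := by
  induction n with
  | zero => simp [eigenprojection_add_eigenprojection h]
  | succ n ih =>
    rw [pow_succ, ih, add_mul, smul_mul_assoc, smul_mul_assoc,
      eigenprojection_mul_companionOfRoots, companionOfRoots_comm,
      eigenprojection_mul_companionOfRoots, smul_smul, smul_smul, pow_succ, pow_succ]

end CompanionOfRoots

lemma Matrix.hasEigenvalue_toLin'_of_mulVec_eq {n R : Type*} [Fintype n] [DecidableEq n]
    [CommRing R] {A : Matrix n n R} {v : n → R} {μ : R} (hv : v ≠ 0) (h : A.mulVec v = μ • v) :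
    Module.End.HasEigenvalue (Matrix.toLin' A) μ :=
  Module.End.hasEigenvalue_of_hasEigenvector
    ⟨Module.End.mem_eigenspace_iff.2 (by rwa [Matrix.toLin'_apply]), hv⟩

theorem matrix_factorial_power_limit_general (p : ℕ) [Fact p.Prime]
    (K : Type*) [NormedField K]
    [Algebra ℚ_[p] K] (hext : ∀ y : ℚ_[p], ‖algebraMap ℚ_[p] K y‖ = ‖y‖)
    [FiniteDimensional ℚ_[p] K]
    (a c α β : K) (hsum : α + β = a) (hprod : α * β = c) (hne : α ≠ β)
    (hα : ‖α‖ = 1) (hβ : ‖β‖ < 1) :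
    let U : Matrix (Fin 2) (Fin 2) K := !![a, 1; -c, 0]
    U.mulVec ![1, -β] = α • ![1, -β] ∧
    U.mulVec ![1, -α] = β • ![1, -α] ∧
    Module.End.HasEigenvalue (Matrix.toLin' U) α ∧
    Module.End.HasEigenvalue (Matrix.toLin' U) β ∧
    ∃ t : K, Tendsto (fun m : ℕ => α ^ (Nat.factorial m)) atTop (nhds t) ∧
      Tendsto (fun m : ℕ => U ^ (Nat.factorial m)) atTop
        (nhds (t • ((α - β)⁻¹ • !![α, 1; -c, -β]))) := by
  subst hsum hprod
  intro U
  have hU : U = companionOfRoots α β := rfl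
  have hvα : U.mulVec ![1, -β] = α • ![1, -β] := companionOfRoots_mulVec α β
  have hvβ : U.mulVec ![1, -α] = β • ![1, -α] := by
    rw [hU, companionOfRoots_comm]; exact companionOfRoots_mulVec β α
  have : IsUltrametricDist K := .of_norm_algebraMap hext
  have : ProperSpace K := .of_norm_algebraMap hext
  have hp : ‖(p : K)‖ < 1 := by
    rw [← map_natCast (algebraMap ℚ_[p] K), hext]; exact Padic.norm_p_lt_one
  have hαlim := tendsto_pow_factorial_of_norm_eq_one (Fact.out : p.Prime).ne_zero hp hα
  have hβlim : Tendsto (fun m : ℕ => β ^ Nat.factorial m) atTop (𝓝 0) :=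
    (tendsto_pow_atTop_nhds_zero_of_norm_lt_one hβ).comp factorial_tendsto_atTop
  refine ⟨hvα, hvβ, Matrix.hasEigenvalue_toLin'_of_mulVec_eq (by simp) hvα,
    Matrix.hasEigenvalue_toLin'_of_mulVec_eq (by simp) hvβ, 1, hαlim, ?_⟩
  simp only [hU, companionOfRoots_pow hne, one_smul]
  have h := (hαlim.smul_const (eigenprojection α β)).add (hβlim.smul_const (eigenprojection β α))
  rwa [one_smul, zero_smul, add_zero] at h

/-- Let `K` be a finite extension of `ℚ_p` with its `p`-adic absolute value, and let
`α ≠ β` be the two roots of `X² − aX + c`.  The matrix `U = [[a, 1], [−c, 0]]` has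
eigenvalues `α` and `β` with respective eigenvectors `(1, −β)` and `(1, −α)`, and if
`|α|_p = 1 > |β|_p`, then `U^{m!}` converges entrywise as `m → ∞` to the projection
onto the `α`-eigenline along the `β`-eigenline, scaled by `t = lim α^{m!}`. -/
theorem matrix_factorial_power_limit (p : ℕ) [Fact p.Prime]
    (K : Type*) [NormedField K] [CompleteSpace K]
    [Algebra ℚ_[p] K] (hext : ∀ y : ℚ_[p], ‖algebraMap ℚ_[p] K y‖ = ‖y‖)
    [FiniteDimensional ℚ_[p] K]
    (a c α β : K) (hsum : α + β = a) (hprod : α * β = c) (hne : α ≠ β)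
    (hα : ‖α‖ = 1) (hβ : ‖β‖ < 1) :
    let U : Matrix (Fin 2) (Fin 2) K := !![a, 1; -c, 0]
    U.mulVec ![1, -β] = α • ![1, -β] ∧
    U.mulVec ![1, -α] = β • ![1, -α] ∧
    Module.End.HasEigenvalue (Matrix.toLin' U) α ∧
    Module.End.HasEigenvalue (Matrix.toLin' U) β ∧
    ∃ t : K, Tendsto (fun m : ℕ => α ^ (Nat.factorial m)) atTop (nhds t) ∧
      Tendsto (fun m : ℕ => U ^ (Nat.factorial m)) atTop
        (nhds (t • ((α - β)⁻¹ • !![α, 1; -c, -β]))) :=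
  matrix_factorial_power_limit_general p K hext a c α β hsum hprod hne hα hβ
end

section
/- Let R be a commutative ring, G a group, ρ : G → GL(2, R) a homomorphism, and c ∈ G with c² = 1 such that ρ(c) = diag(−1, 1). Writing ρ(g) = [[a(g), b(g)], [c(g), d(g)]], the functions a, d and x(g,h) := a(gh) − a(g)a(h) together with c form a pseudo-representation of G with values in R, and moreover x(g,h) = b(g)c(h). -/
/-- Let `ρ : G → GL(2, R)` be a homomorphism and `c ∈ G` with `c² = 1` and
`ρ(c) = diag(−1, 1)`.  Writing `ρ(g) = [[a(g), b(g)], [c'(g), d(g)]]`, the data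
`(a, d, x, c)` with `x(g,h) = a(gh) − a(g)a(h)` is a pseudo-representation of `G`
in `R`, and moreover `x(g,h) = b(g)·c'(h)`. -/
theorem pseudoRep_of_representation
    (R : Type*) [CommRing R] (G : Type*) [Group G]
    (ρ : G →* Matrix.GeneralLinearGroup (Fin 2) R) (c : G) (hc : c * c = 1)
    (hρc : ((ρ c : Matrix (Fin 2) (Fin 2) R)) = !![(-1 : R), 0; 0, 1]) :
    let a : G → R := fun g => (ρ g : Matrix (Fin 2) (Fin 2) R) 0 0
    let b : G → R := fun g => (ρ g : Matrix (Fin 2) (Fin 2) R) 0 1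
    let c' : G → R := fun g => (ρ g : Matrix (Fin 2) (Fin 2) R) 1 0
    let d : G → R := fun g => (ρ g : Matrix (Fin 2) (Fin 2) R) 1 1
    let x : G → G → R := fun g h => a (g * h) - a g * a h
    (∀ g h, a (g * h) = a g * a h + x g h) ∧
    (∀ g h, d (g * h) = d g * d h + x h g) ∧
    (∀ g h j k, x (g * h) (j * k) =
      a g * a k * x h j + a k * d h * x g j + a g * d j * x h k + d h * d j * x g k) ∧
    (∀ g h j k, x g h * x j k = x g k * x j h) ∧
    a 1 = 1 ∧ d 1 = 1 ∧ d c = 1 ∧ a c = -1 ∧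
    (∀ g, x g 1 = 0 ∧ x 1 g = 0 ∧ x g c = 0 ∧ x c g = 0) ∧
    (∀ g h, x g h = b g * c' h) := by
  intro a b c' d x
  -- entrywise multiplication formulas
  have hmul : ∀ (g h : G) (i j : Fin 2),
      (ρ (g * h) : Matrix (Fin 2) (Fin 2) R) i j =
        (ρ g : Matrix (Fin 2) (Fin 2) R) i 0 * (ρ h : Matrix (Fin 2) (Fin 2) R) 0 j +
        (ρ g : Matrix (Fin 2) (Fin 2) R) i 1 * (ρ h : Matrix (Fin 2) (Fin 2) R) 1 j := by
    intro g h i j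
    rw [map_mul ρ g h]
    simp [Matrix.GeneralLinearGroup.coe_mul, Matrix.mul_apply, Fin.sum_univ_two]
  have ha : ∀ g h : G, a (g * h) = a g * a h + b g * c' h := fun g h => hmul g h 0 0
  have hb : ∀ g h : G, b (g * h) = a g * b h + b g * d h := fun g h => hmul g h 0 1
  have hc' : ∀ g h : G, c' (g * h) = c' g * a h + d g * c' h := fun g h => hmul g h 1 0
  have hd : ∀ g h : G, d (g * h) = c' g * b h + d g * d h := fun g h => hmul g h 1 1
  -- x g h = b g * c' h
  have hx : ∀ g h : G, x g h = b g * c' h := by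
    intro g h; show a (g * h) - a g * a h = _; rw [ha]; ring
  have hone : (ρ (1 : G) : Matrix (Fin 2) (Fin 2) R) = 1 := by
    rw [map_one ρ]; rfl
  have ha1 : a 1 = 1 := by show (ρ (1:G) : Matrix (Fin 2) (Fin 2) R) 0 0 = 1; rw [hone]; simp
  have hd1 : d 1 = 1 := by show (ρ (1:G) : Matrix (Fin 2) (Fin 2) R) 1 1 = 1; rw [hone]; simp
  have hb1 : b 1 = 0 := by show (ρ (1:G) : Matrix (Fin 2) (Fin 2) R) 0 1 = 0; rw [hone]; simp
  have hc'1 : c' 1 = 0 := by show (ρ (1:G) : Matrix (Fin 2) (Fin 2) R) 1 0 = 0; rw [hone]; simp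
  have hac : a c = -1 := by show (ρ c : Matrix (Fin 2) (Fin 2) R) 0 0 = -1; rw [hρc]; simp
  have hdc : d c = 1 := by show (ρ c : Matrix (Fin 2) (Fin 2) R) 1 1 = 1; rw [hρc]; simp
  have hbc : b c = 0 := by show (ρ c : Matrix (Fin 2) (Fin 2) R) 0 1 = 0; rw [hρc]; simp
  have hc'c : c' c = 0 := by show (ρ c : Matrix (Fin 2) (Fin 2) R) 1 0 = 0; rw [hρc]; simp
  refine ⟨?_, ?_, ?_, ?_, ha1, hd1, hdc, hac, ?_, hx⟩
  · intro g h; simp [hx, ha]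
  · intro g h; rw [hd, hx]; ring
  · intro g h j k
    simp only [hx, hb, hc']
    ring
  · intro g h j k; simp only [hx]; ring
  · intro g; simp [hx, hb1, hc'1, hbc, hc'c]
end

section
/- Let Λ = ℤ_p[[T]], p odd, u = 1+p, and for integers k ≥ a let I_k = (1 + T − u^k) ⊂ Λ. Then the natural map Λ → lim←_m Λ / ∏_{a ≤ k ≤ m} I_k is an isomorphism of topological rings. -/
/-!
With the coefficientwise topology, `Λ ≃ ℤ_pᴺ` is a compact Hausdorff topological ring, so its
principal ideals are closed (images of the compact space under multiplication) and the quotients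
`Λ/∏ I_k` are Hausdorff. Each factor `1 + T - u^k = T + (1 - u^k)` lies in the maximal ideal
`𝔪 = (p, T)`, so the `m`-th product lies in `𝔪^(m+1-a)` and Krull's intersection theorem gives
injectivity. A compatible family of residues cuts out a decreasing sequence of nonempty closed
cosets, whose intersection is nonempty by compactness: this is surjectivity. Finally a continuous
bijection from a compact space onto a Hausdorff space is a homeomorphism.
-/

open PowerSeries

variable (p : ℕ) [Fact p.Prime]

/-- The product `∏_{a ≤ k ≤ m} (1 + T − u^k)` in `Λ = ℤ_p[[T]]`, `u = 1 + p`;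
it generates the product ideal `∏_{a ≤ k ≤ m} I_k` with `I_k = (1 + T − u^k)`. -/
noncomputable def wprod (a m : ℕ) : PowerSeries ℤ_[p] :=
  ∏ k ∈ Finset.Icc a m, (1 + X - C ((1 + p : ℤ_[p]) ^ k))

lemma wprod_dvd (a m : ℕ) : wprod p a m ∣ wprod p a (m + 1) :=
  Finset.prod_dvd_prod_of_subset _ _ _ (Finset.Icc_subset_Icc_right (Nat.le_succ m))

/-- The transition map `Λ/∏_{k ≤ m+1} I_k → Λ/∏_{k ≤ m} I_k`. -/
noncomputable def wmap (a m : ℕ) :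
    PowerSeries ℤ_[p] ⧸ Ideal.span {wprod p a (m + 1)} →+*
      PowerSeries ℤ_[p] ⧸ Ideal.span {wprod p a m} :=
  Ideal.quotientMap _ (RingHom.id _)
    (by
      rw [Ideal.span_le]
      intro y hy
      simp only [Set.mem_singleton_iff] at hy
      subst hy
      simpa [Ideal.mem_comap, Ideal.mem_span_singleton] using wprod_dvd p a m)

/-- The inverse limit `lim←_m Λ/∏_{a ≤ k ≤ m} I_k`, as a subring of the product. -/
noncomputable def iwasawaInverseLimit (a : ℕ) :
    Subring (Π m : ℕ, PowerSeries ℤ_[p] ⧸ Ideal.span {wprod p a m}) where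
  carrier := {f | ∀ m, wmap p a m (f (m + 1)) = f m}
  mul_mem' hx hy := fun m => by
    simp only [Pi.mul_apply, map_mul]
    rw [hx m, hy m]
  one_mem' := fun m => by simp
  add_mem' hx hy := fun m => by
    simp only [Pi.add_apply, (wmap p a m).map_add]
    rw [hx m, hy m]
  zero_mem' := fun m => by simp
  neg_mem' hx := fun m => by
    simp only [Pi.neg_apply, (wmap p a m).map_neg]
    rw [hx m]

/-- The `(p,T)`-adic topology on `Λ = ℤ_p[[T]]`, which coincides with the topology
of coefficientwise convergence. -/
noncomputable def lambdaTopology : TopologicalSpace (PowerSeries ℤ_[p]) :=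
  TopologicalSpace.induced (fun F => fun n : ℕ => PowerSeries.coeff (R := ℤ_[p]) n F) inferInstance

open IsLocalRing

theorem lambdaTopology_eq_piTopology :
    lambdaTopology p = PowerSeries.WithPiTopology.instTopologicalSpace ℤ_[p] := by
  apply le_antisymm
  · rw [← continuous_id_iff_le]
    let := lambdaTopology p
    refine continuous_pi (A := fun _ : Unit →₀ ℕ => ℤ_[p]) fun d => ?_
    obtain ⟨n, rfl⟩ : ∃ n, d = Finsupp.single () n := ⟨d (), by ext; simp⟩
    exact (continuous_apply (A := fun _ : ℕ => ℤ_[p]) n).comp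
      (continuous_induced_dom (f := fun F : PowerSeries ℤ_[p] => fun n => coeff n F))
  · open scoped PowerSeries.WithPiTopology in
    exact continuous_id_iff_le.1 <| continuous_induced_rng.2 <|
      continuous_pi (PowerSeries.WithPiTopology.continuous_coeff ℤ_[p])

open scoped PowerSeries.WithPiTopology in
theorem PowerSeries.WithPiTopology.compactSpace {R : Type*} [TopologicalSpace R] [CompactSpace R] :
    CompactSpace R⟦X⟧ :=
  inferInstanceAs (CompactSpace ((Unit →₀ ℕ) → R))

section CompactRing

variable {R : Type*} [CommRing R] [TopologicalSpace R]

theorem Ideal.isClosed_span_singleton [ContinuousMul R] [CompactSpace R] [T2Space R] (w : R) :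
    IsClosed (Ideal.span {w} : Set R) := by
  have : (Ideal.span {w} : Set R) = Set.range (w * ·) := by
    ext; simp [Ideal.mem_span_singleton', mul_comm]
  rw [this]
  exact (isCompact_range (continuous_const.mul continuous_id)).isClosed

theorem Ideal.Quotient.t2Space_of_isClosed [IsTopologicalRing R] (I : Ideal R)
    (hI : IsClosed (I : Set R)) : T2Space (R ⧸ I) :=
  have := QuotientAddGroup.instT3Space I.toAddSubgroup
  inferInstance

theorem Ideal.exists_forall_sub_mem_of_compactSpace [ContinuousSub R] [CompactSpace R]
    (I : ℕ → Ideal R) (hI : ∀ m, I (m + 1) ≤ I m) (hclosed : ∀ m, IsClosed (I m : Set R))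
    (x : ℕ → R) (hx : ∀ m, x (m + 1) - x m ∈ I m) : ∃ y, ∀ m, y - x m ∈ I m := by
  set S : ℕ → Set R := fun m => (· - x m) ⁻¹' I m
  have hS : ∀ m, IsClosed (S m) := fun m => (hclosed m).preimage (continuous_sub_right _)
  have hanti : ∀ m, S (m + 1) ⊆ S m := fun m y hy => by
    simpa [S] using (I m).add_mem (hI m hy) (hx m)
  obtain ⟨y, hy⟩ := IsCompact.nonempty_iInter_of_sequence_nonempty_isCompact_isClosed S hanti
    (fun m => ⟨x m, by simp [S]⟩) (hS 0).isCompact hS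
  exact ⟨y, Set.mem_iInter.1 hy⟩

end CompactRing

theorem PowerSeries.X_add_C_mem_maximalIdeal {R : Type*} [CommRing R] [IsLocalRing R] {c : R}
    (hc : c ∈ maximalIdeal R) : X + C c ∈ maximalIdeal R⟦X⟧ := by
  rw [mem_maximalIdeal, mem_nonunits_iff, isUnit_iff_constantCoeff]
  simpa using hc

theorem wprod_factor_mem_maximalIdeal (k : ℕ) :
    1 + X - C ((1 + p : ℤ_[p]) ^ k) ∈ maximalIdeal ℤ_[p]⟦X⟧ := by
  have h : 1 + X - C ((1 + p : ℤ_[p]) ^ k) = X + C (1 - (1 + p : ℤ_[p]) ^ k) := by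
    rw [map_sub, map_one]; ring
  rw [h]
  apply X_add_C_mem_maximalIdeal
  rw [PadicInt.maximalIdeal_eq_span_p, Ideal.mem_span_singleton, dvd_sub_comm]
  simpa using sub_dvd_pow_sub_pow (1 + p : ℤ_[p]) 1 k

theorem wprod_mem_maximalIdeal_pow (a m : ℕ) :
    wprod p a m ∈ maximalIdeal ℤ_[p]⟦X⟧ ^ (m + 1 - a) := by
  rw [← Nat.card_Icc, ← Finset.prod_const]
  exact Ideal.prod_mem_prod fun k _ => wprod_factor_mem_maximalIdeal p k

theorem eq_zero_of_forall_wprod_dvd (a : ℕ) {F : ℤ_[p]⟦X⟧} (hF : ∀ m, wprod p a m ∣ F) :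
    F = 0 := by
  have hmem : F ∈ ⨅ i : ℕ, maximalIdeal ℤ_[p]⟦X⟧ ^ i := Ideal.mem_iInf.2 fun i =>
    Ideal.pow_le_pow_right (by omega : i ≤ a + i + 1 - a)
      (Ideal.mem_of_dvd _ (hF (a + i)) (wprod_mem_maximalIdeal_pow p a (a + i)))
  rwa [Ideal.iInf_pow_eq_bot_of_isLocalRing _ (maximalIdeal.isMaximal _).ne_top,
    Ideal.mem_bot] at hmem

theorem wmap_mk (a m : ℕ) (F : ℤ_[p]⟦X⟧) :
    wmap p a m (Ideal.Quotient.mk _ F) = Ideal.Quotient.mk (Ideal.span {wprod p a m}) F :=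
  Ideal.quotientMap_mk

noncomputable def toIwasawaInverseLimit (a : ℕ) : ℤ_[p]⟦X⟧ →+* iwasawaInverseLimit p a :=
  (RingHom.pi fun m => Ideal.Quotient.mk (Ideal.span {wprod p a m})).codRestrict _
    fun F m => wmap_mk p a m F

theorem toIwasawaInverseLimit_injective (a : ℕ) :
    Function.Injective (toIwasawaInverseLimit p a) := by
  refine (injective_iff_map_eq_zero _).2 fun F hF => eq_zero_of_forall_wprod_dvd p a fun m => ?_
  rw [← Ideal.mem_span_singleton, ← Ideal.Quotient.eq_zero_iff_mem]
  exact congrFun (congrArg Subtype.val hF) m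

open scoped PowerSeries.WithPiTopology in
theorem toIwasawaInverseLimit_surjective (a : ℕ) :
    Function.Surjective (toIwasawaInverseLimit p a) := by
  have := PowerSeries.WithPiTopology.compactSpace (R := ℤ_[p])
  rintro ⟨f, hf⟩
  choose x hx using fun m => Ideal.Quotient.mk_surjective (f m)
  have hcompat : ∀ m, x (m + 1) - x m ∈ Ideal.span {wprod p a m} := fun m => by
    rw [← Ideal.Quotient.eq, ← wmap_mk, hx, hx]
    exact hf m
  obtain ⟨y, hy⟩ := Ideal.exists_forall_sub_mem_of_compactSpace _
    (fun m => Ideal.span_singleton_le_span_singleton.2 (wprod_dvd p a m))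
    (fun m => Ideal.isClosed_span_singleton _) x hcompat
  exact ⟨y, Subtype.ext <| funext fun m => (Ideal.Quotient.eq.2 (hy m)).trans (hx m)⟩

theorem iwasawa_algebra_isom_inverse_limit (a : ℕ) :
    letI : TopologicalSpace (PowerSeries ℤ_[p]) := lambdaTopology p
    ∃ e : PowerSeries ℤ_[p] ≃+* iwasawaInverseLimit p a,
      Continuous ⇑e ∧ Continuous ⇑e.symm ∧
      ∀ (F : PowerSeries ℤ_[p]) (m : ℕ),
        ((e F : Π m : ℕ, PowerSeries ℤ_[p] ⧸ Ideal.span {wprod p a m}) m) =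
          Ideal.Quotient.mk (Ideal.span {wprod p a m}) F := by
  rw [lambdaTopology_eq_piTopology]
  open scoped PowerSeries.WithPiTopology in
  have := PowerSeries.WithPiTopology.compactSpace (R := ℤ_[p])
  have : ∀ m, T2Space (ℤ_[p]⟦X⟧ ⧸ Ideal.span {wprod p a m}) := fun m =>
    Ideal.Quotient.t2Space_of_isClosed _ (Ideal.isClosed_span_singleton _)
  let e := RingEquiv.ofBijective (toIwasawaInverseLimit p a)
    ⟨toIwasawaInverseLimit_injective p a, toIwasawaInverseLimit_surjective p a⟩
  have he : Continuous e := (continuous_pi fun m => continuous_quot_mk).subtype_mk _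
  exact ⟨e, he, he.continuous_symm_of_equiv_compact_to_t2 (f := e.toEquiv), fun F m => rfl⟩
end

section
/- Let K be a complete nonarchimedean field, A its valuation ring, and M the A-module of power series Σ aₙ qⁿ ∈ A[[q]] (p-adically complete). Let Frob = V (substitution q ↦ q^p) and U as before. For f₀ ∈ ker U and λ ∈ A with |λ| < 1, the series f_λ = Σ_{j≥0} λ^j Frob^j(f₀) converges in M and satisfies U(f_λ) = λ f_λ. Consequently, for each such λ, the map f₀ ↦ f_λ is an injective A-linear map ker U → ker(U − λ). -/
/-!
`Frob` is `PowerSeries.expand p`, so `Frobʲ` is the substitution `q ↦ q^(pʲ)`, and `U ∘ Frob = id`.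
When `f₀` has no constant term (which `U f₀ = 0` forces), the `n`-th coefficient of
`λʲ Frobʲ f₀` vanishes as soon as `pʲ > n`, so `Φ f₀` is the coefficientwise finite sum of the
series; its terms are bounded by `‖λ‖ʲ`, which gives uniform convergence by the Weierstrass
M-test. Applying `U` termwise, `U f₀ = 0` kills the term `j = 0` and `U Frobʲ⁺¹ = Frobʲ` shifts
the others, so `U (Φ f₀) = λ Φ f₀`. Finally `Φ` is unitriangular: the `n`-th coefficient of `Φ f`
is `aₙ` plus a combination of the `aₘ` with `m < n`, so `Φ` is injective.
-/

open Filter Finset PowerSeries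

noncomputable section

namespace PowerSeries

def atkinU {R : Type*} [Semiring R] (p : ℕ) (f : R⟦X⟧) : R⟦X⟧ :=
  mk fun n => coeff (p * n) f

section CommRing

variable {R : Type*} [CommRing R] {p : ℕ}

theorem iterate_expand (hp : p ≠ 0) (j : ℕ) :
    (expand (R := R) p hp)^[j] = expand (p ^ j) (pow_ne_zero j hp) := by
  induction j with
  | zero => ext1 f; simp
  | succ j ih =>
    ext1 f
    rw [Function.iterate_succ_apply', ih]
    simp only [pow_succ']
    exact (expand_mul p hp _ _ f).symm

theorem coeff_expand_eq_zero_of_lt {r n : ℕ} (hr : r ≠ 0) {f : R⟦X⟧} (h0 : coeff 0 f = 0) (hn : n < r) :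
    coeff n (expand r hr f) = 0 := by
  rcases n.eq_zero_or_pos with rfl | hpos
  · simpa using h0
  · exact coeff_expand_of_not_dvd r hr f (Nat.not_dvd_of_pos_of_lt hpos hn)

/-- The series `∑ⱼ lʲ Frobʲ f`, with the `n`-th coefficient cut off at `j ≤ n`; the cutoff loses
nothing only when `coeff 0 f = 0` (see `coeff_eigenseries_eq_sum`). -/
def eigenseries (p : ℕ) (l : R) (f : R⟦X⟧) : R⟦X⟧ :=
  mk fun n => ∑ j ∈ range (n + 1),
    if p ^ j ∣ n then l ^ j * coeff (n / p ^ j) f else 0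

theorem coeff_eigenseries (hp : p ≠ 0) (l : R) (f : R⟦X⟧) (n : ℕ) :
    coeff n (eigenseries p l f) =
      ∑ j ∈ range (n + 1), l ^ j * coeff n (expand (p ^ j) (pow_ne_zero j hp) f) := by
  simp [eigenseries, coeff_expand, mul_ite]

theorem eigenseries_add (p : ℕ) (l : R) (f g : R⟦X⟧) :
    eigenseries p l (f + g) = eigenseries p l f + eigenseries p l g := by
  ext n
  simp [eigenseries, mul_add, ite_add_zero, sum_add_distrib]

theorem eigenseries_smul (p : ℕ) (l c : R) (f : R⟦X⟧) :
    eigenseries p l (c • f) = c • eigenseries p l f := by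
  ext n
  simp [eigenseries, mul_sum, mul_left_comm]

theorem coeff_eigenseries_eq_sum (hp : 1 < p) (l : R) {f : R⟦X⟧} (h0 : coeff 0 f = 0)
    {n N : ℕ} (hN : n < p ^ N) :
    coeff n (eigenseries p l f) =
      ∑ j ∈ range N, l ^ j * coeff n (expand (p ^ j) (pow_ne_zero j (by omega)) f) := by
  have hvanish : ∀ {M : ℕ}, n < p ^ M → ∀ j ≥ M,
      l ^ j * coeff n (expand (p ^ j) (pow_ne_zero j (by omega)) f) = 0 := fun hM j hj => by
    rw [coeff_expand_eq_zero_of_lt _ h0 (hM.trans_le (Nat.pow_le_pow_right (by omega) hj)), mul_zero]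
  rw [coeff_eigenseries (by omega)]
  rcases le_total N (n + 1) with h | h
  · exact eventually_constant_sum (hvanish hN) h
  · exact (eventually_constant_sum (hvanish (n.lt_succ_self.trans (Nat.lt_pow_self hp))) h).symm

theorem coeff_expand_pow_succ_mul (hp : p ≠ 0) (f : R⟦X⟧) (j n : ℕ) :
    coeff (p * n) (expand (p ^ (j + 1)) (pow_ne_zero _ hp) f) =
      coeff n (expand (p ^ j) (pow_ne_zero j hp) f) := by
  simp only [pow_succ']
  rw [expand_mul p hp, coeff_expand_mul]

theorem atkinU_eigenseries (hp : 1 < p) (l : R) {f : R⟦X⟧} (hf : atkinU p f = 0) :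
    atkinU p (eigenseries p l f) = l • eigenseries p l f := by
  have hc : ∀ n, coeff (p * n) f = 0 := fun n => by
    simpa [atkinU] using congrArg (coeff n) hf
  ext n
  have hN : p * n < p ^ (n + 1 + 1) := by
    rw [pow_succ']
    exact Nat.mul_lt_mul_of_pos_left (n.lt_succ_self.trans (Nat.lt_pow_self hp)) (by omega)
  rw [atkinU, coeff_mk, coeff_eigenseries_eq_sum hp l (by simpa using hc 0) hN, sum_range_succ',
    coeff_smul, coeff_eigenseries (by omega), smul_eq_mul, mul_sum]
  have hzero : coeff (p * n) (expand (p ^ 0) (pow_ne_zero 0 (by omega)) f) = 0 := by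
    simp [hc]
  rw [hzero, mul_zero, add_zero]
  refine sum_congr rfl fun j _ => ?_
  rw [coeff_expand_pow_succ_mul (by omega), pow_succ', mul_assoc]

theorem coeff_expand_congr {r n : ℕ} (hr : 1 < r) (hn : 0 < n) {f g : R⟦X⟧}
    (h : ∀ m < n, coeff m f = coeff m g) :
    coeff n (expand r (by omega) f) = coeff n (expand r (by omega) g) := by
  simp only [coeff_expand]
  split_ifs
  · exact h _ (Nat.div_lt_self hn hr)
  · rfl

theorem eigenseries_injective (hp : 1 < p) (l : R) : Function.Injective (eigenseries p l) := by
  intro f g hfg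
  ext n
  induction n using Nat.strong_induction_on with
  | _ n ih =>
    have e := congrArg (coeff n) hfg
    rw [coeff_eigenseries (by omega), coeff_eigenseries (by omega), sum_range_succ',
      sum_range_succ'] at e
    rw [sum_congr rfl fun j hj => by
      rw [coeff_expand_congr (Nat.one_lt_pow j.succ_ne_zero hp) (by simp at hj; omega) ih]] at e
    simpa using add_left_cancel e

end CommRing

section Normed

variable {K : Type*} [NormedField K] {p : ℕ}

theorem norm_coeff_expand_le {r : ℕ} (hr : r ≠ 0) {f : K⟦X⟧} {C : ℝ}
    (hf : ∀ n, ‖coeff n f‖ ≤ C) (n : ℕ) : ‖coeff n (expand r hr f)‖ ≤ C := by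
  rw [coeff_expand]
  split_ifs
  · exact hf _
  · simpa using (norm_nonneg _).trans (hf 0)

theorem coeff_eigenseries_eq_tsum (hp : 1 < p) (l : K) {f : K⟦X⟧} (h0 : coeff 0 f = 0) (n : ℕ) :
    coeff n (eigenseries p l f) =
      ∑' j, l ^ j * coeff n (expand (p ^ j) (pow_ne_zero j (by omega)) f) := by
  rw [coeff_eigenseries (by omega)]
  refine (tsum_eq_sum fun j hj => ?_).symm
  have hj : n < j := by simpa using hj
  rw [coeff_expand_eq_zero_of_lt _ h0 (hj.trans (Nat.lt_pow_self hp)), mul_zero]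

theorem tendstoUniformly_coeff_sum_expand [CompleteSpace K] (hp : 1 < p) {l : K} (hl : ‖l‖ < 1)
    {f : K⟦X⟧} {C : ℝ} (hf : ∀ n, ‖coeff n f‖ ≤ C) (h0 : coeff 0 f = 0) :
    TendstoUniformly
      (fun m n => ∑ j ∈ range m, l ^ j * coeff n (expand (p ^ j) (pow_ne_zero j (by omega)) f))
      (fun n => coeff n (eigenseries p l f)) atTop := by
  simp_rw [coeff_eigenseries_eq_tsum hp l h0]
  refine tendstoUniformly_tsum_nat ((summable_geometric_of_lt_one (norm_nonneg l) hl).mul_left C)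
    fun j n => ?_
  rw [norm_mul, norm_pow, mul_comm]
  exact mul_le_mul_of_nonneg_right (norm_coeff_expand_le _ hf n) (by positivity)

end Normed

end PowerSeries

end

theorem frobenius_eigenseries_general (K : Type*) [NontriviallyNormedField K]
    [CompleteSpace K] (p : ℕ) (hp : p.Prime)
    (l : K) (hl : ‖l‖ < 1) :
    let U : PowerSeries K → PowerSeries K := fun f =>
      PowerSeries.mk fun n => PowerSeries.coeff (R := K) (p * n) f
    let Frob : PowerSeries K → PowerSeries K := fun f =>
      PowerSeries.mk fun n => if p ∣ n then PowerSeries.coeff (R := K) (n / p) f else 0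
    let Φ : PowerSeries K → PowerSeries K := fun f =>
      PowerSeries.mk fun n => ∑ j ∈ Finset.range (n + 1),
        if p ^ j ∣ n then l ^ j * PowerSeries.coeff (R := K) (n / p ^ j) f else 0
    (∀ f g, Φ (f + g) = Φ f + Φ g) ∧
    (∀ (c : K) (f : PowerSeries K), Φ (c • f) = c • Φ f) ∧
    (∀ f₀ : PowerSeries K, (∀ n, ‖PowerSeries.coeff (R := K) n f₀‖ ≤ 1) → U f₀ = 0 →
      TendstoUniformly
        (fun m => fun n : ℕ =>
          PowerSeries.coeff (R := K) n (∑ j ∈ Finset.range m, l ^ j • Frob^[j] f₀))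
        (fun n : ℕ => PowerSeries.coeff (R := K) n (Φ f₀)) atTop ∧
      U (Φ f₀) = l • Φ f₀) ∧
    Set.InjOn Φ {f | U f = 0} := by
  intro U Frob Φ
  have hFrob : Frob = expand p hp.ne_zero := funext fun f =>
    PowerSeries.ext fun n => by simp [Frob, coeff_expand]
  have hU : U = atkinU p := rfl
  have hΦ : Φ = eigenseries p l := rfl
  rw [hU, hFrob, hΦ]
  refine ⟨eigenseries_add p l, eigenseries_smul p l, fun f₀ hb hf₀ =>
    ⟨?_, atkinU_eigenseries hp.one_lt l hf₀⟩,
    (eigenseries_injective hp.one_lt l).injOn⟩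
  have h0 : coeff 0 f₀ = 0 := by simpa [atkinU] using congrArg (coeff 0) hf₀
  simp only [iterate_expand, map_sum, coeff_smul, smul_eq_mul]
  exact tendstoUniformly_coeff_sum_expand hp.one_lt hl hb h0

/-- Let `K` be a complete nonarchimedean field and consider power series over `K`
with coefficients in the valuation ring (norm `≤ 1`), with the sup-norm (uniform,
coefficientwise) convergence.  Let `Frob = V : q ↦ q^p` and `U` as usual.  For
`f₀ ∈ ker U` (with bounded coefficients) and `‖l‖ < 1`, the series
`f_l = Σ_j l^j Frob^j(f₀)` converges (its sum is the series `Φ f₀` written out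
coefficientwise) and satisfies `U(f_l) = l·f_l`.  Consequently `f₀ ↦ f_l` is an
injective linear map `ker U → ker(U − l)`. -/
theorem frobenius_eigenseries (K : Type*) [NontriviallyNormedField K]
    [IsUltrametricDist K] [CompleteSpace K] (p : ℕ) (hp : p.Prime)
    (l : K) (hl : ‖l‖ < 1) :
    let U : PowerSeries K → PowerSeries K := fun f =>
      PowerSeries.mk fun n => PowerSeries.coeff (R := K) (p * n) f
    let Frob : PowerSeries K → PowerSeries K := fun f =>
      PowerSeries.mk fun n => if p ∣ n then PowerSeries.coeff (R := K) (n / p) f else 0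
    let Φ : PowerSeries K → PowerSeries K := fun f =>
      PowerSeries.mk fun n => ∑ j ∈ Finset.range (n + 1),
        if p ^ j ∣ n then l ^ j * PowerSeries.coeff (R := K) (n / p ^ j) f else 0
    (∀ f g, Φ (f + g) = Φ f + Φ g) ∧
    (∀ (c : K) (f : PowerSeries K), Φ (c • f) = c • Φ f) ∧
    (∀ f₀ : PowerSeries K, (∀ n, ‖PowerSeries.coeff (R := K) n f₀‖ ≤ 1) → U f₀ = 0 →
      TendstoUniformly
        (fun m => fun n : ℕ =>
          PowerSeries.coeff (R := K) n (∑ j ∈ Finset.range m, l ^ j • Frob^[j] f₀))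
        (fun n : ℕ => PowerSeries.coeff (R := K) n (Φ f₀)) atTop ∧
      U (Φ f₀) = l • Φ f₀) ∧
    Set.InjOn Φ {f | U f = 0} :=
  frobenius_eigenseries_general K p hp l hl
end
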